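/- Let A be a set, n ≥ 1, C a function clone on A preserving the disequality relation ≠, and G a permutation group on A that is n-"primitive" and such that every function in C is n-canonical with respect to G. Let (S, ~) be a minimal subfactor of the action of C on A^n with G-invariant ~-classes. Then any C-invariant approximation η of ~ that is presmooth with respect to G is also very smooth with respect to G. -/

import Mathlib

namespace Paper

/-! ### Tuples, permutations, orbits -/

/-- Componentwise application of a `k`-ary operation to `k` many `n`-tuples. -/
def appN {A : Type*} {k n : ℕ} (f : (Fin k → A) → A) (xs : Fin k → Fin n → A) : Fin n → A :=
  fun j => f fun i => xs i j

/-- Two tuples are disjoint if they share no entries. -/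
def DisjTup {A : Type*} {n : ℕ} (a b : Fin n → A) : Prop := ∀ i j, a i ≠ b j

/-- Componentwise action of a permutation on a tuple. -/
def permTup {A : Type*} {n : ℕ} (g : Equiv.Perm A) (a : Fin n → A) : Fin n → A := fun i => g (a i)

/-- Orbit equivalence of tuples under a set of permutations. -/
def OrbEq {A : Type*} (G : Set (Equiv.Perm A)) {n : ℕ} (a b : Fin n → A) : Prop :=
  ∃ g ∈ G, permTup g a = b

/-- `r` is an equivalence relation with support `S`. -/
structure EqvOn {X : Type*} (S : Set X) (r : X → X → Prop) : Prop where
  refl : ∀ a ∈ S, r a a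
  symm : ∀ {a b}, r a b → r b a
  trans : ∀ {a b c}, r a b → r b c → r a c
  dom : ∀ {a b}, r a b → a ∈ S ∧ b ∈ S

/-! ### Function clones -/

/-- A function clone, given as a family of sets of finitary operations:
it contains all projections and is closed under composition. -/
def IsClone {A : Type*} (C : ∀ k : ℕ, Set ((Fin k → A) → A)) : Prop :=
  (∀ (k : ℕ) (i : Fin k), (fun x => x i) ∈ C k) ∧
  (∀ (k m : ℕ) (f : (Fin k → A) → A) (g : Fin k → (Fin m → A) → A),
    f ∈ C k → (∀ i, g i ∈ C m) → (fun x => f fun i => g i x) ∈ C m)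

/-- Membership of a unary function in a clone. -/
def UnaryMem {A : Type*} (C : ∀ k : ℕ, Set ((Fin k → A) → A)) (u : A → A) : Prop :=
  (fun x : Fin 1 → A => u (x 0)) ∈ C 1

/-- The permutations invertibly contained in a clone. -/
def GrpOf {A : Type*} (C : ∀ k : ℕ, Set ((Fin k → A) → A)) : Set (Equiv.Perm A) :=
  {σ : Equiv.Perm A | UnaryMem C ⇑σ ∧ UnaryMem C ⇑σ.symm}

/-- A set of permutations is oligomorphic: finitely many orbits on `m`-tuples for all `m`. -/
def Oligo {A : Type*} (G : Set (Equiv.Perm A)) : Prop :=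
  ∀ m : ℕ, ∃ l : List (Fin m → A), ∀ a : Fin m → A, ∃ b ∈ l, OrbEq G b a

/-- The clone is topologically closed (w.r.t. pointwise convergence). -/
def CloneClosed {A : Type*} (C : ∀ k : ℕ, Set ((Fin k → A) → A)) : Prop :=
  ∀ (k : ℕ) (f : (Fin k → A) → A),
    (∀ F : Finset (Fin k → A), ∃ g ∈ C k, ∀ x ∈ F, f x = g x) → f ∈ C k

/-- Model-complete core: the unary part coincides with the closure of the invertibles. -/
def MCCoreClone {A : Type*} (C : ∀ k : ℕ, Set ((Fin k → A) → A)) : Prop :=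
  ∀ u : A → A, UnaryMem C u ↔ ∀ F : Finset A, ∃ σ ∈ GrpOf C, ∀ x ∈ F, u x = σ x

/-- Invariance of a set of `n`-tuples under the componentwise action of a clone. -/
def SetInvN {A : Type*} (C : ∀ k : ℕ, Set ((Fin k → A) → A)) {n : ℕ}
    (S : Set (Fin n → A)) : Prop :=
  ∀ (k : ℕ) (f : (Fin k → A) → A), f ∈ C k →
    ∀ xs : Fin k → Fin n → A, (∀ i, xs i ∈ S) → appN f xs ∈ S

/-- Invariance of a binary relation on `n`-tuples under a clone. -/
def RelInvN {A : Type*} (C : ∀ k : ℕ, Set ((Fin k → A) → A)) {n : ℕ}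
    (r : (Fin n → A) → (Fin n → A) → Prop) : Prop :=
  ∀ (k : ℕ) (f : (Fin k → A) → A), f ∈ C k → ∀ xs ys : Fin k → Fin n → A,
    (∀ i, r (xs i) (ys i)) → r (appN f xs) (appN f ys)

/-- Equational triviality: existence of a clone homomorphism to the clone of projections. -/
def EquaTrivial {A : Type*} (C : ∀ k : ℕ, Set ((Fin k → A) → A)) : Prop :=
  ∃ idx : ∀ k : ℕ, ((Fin k → A) → A) → Fin k,
    (∀ (k : ℕ) (i : Fin k), idx k (fun x => x i) = i) ∧
    (∀ (k m : ℕ) (f : (Fin k → A) → A) (g : Fin k → (Fin m → A) → A),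
      f ∈ C k → (∀ i, g i ∈ C m) →
      idx m (fun x => f fun i => g i x) = idx m (g (idx k f)))

/-- A clone is `n`-canonical w.r.t. `G`: it preserves `G`-orbit-equivalence of `n`-tuples. -/
def NCanonical {A : Type*} (G : Set (Equiv.Perm A)) (n : ℕ)
    (C : ∀ k : ℕ, Set ((Fin k → A) → A)) : Prop :=
  ∀ (k : ℕ) (f : (Fin k → A) → A), f ∈ C k → ∀ xs ys : Fin k → Fin n → A,
    (∀ i, OrbEq G (xs i) (ys i)) → OrbEq G (appN f xs) (appN f ys)

/-! ### Smooth approximations -/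

/-- `G` leaves the `r`-classes invariant. -/
def ClassesInv {A : Type*} (G : Set (Equiv.Perm A)) {n : ℕ} (S : Set (Fin n → A))
    (r : (Fin n → A) → (Fin n → A) → Prop) : Prop :=
  ∀ g ∈ G, ∀ a ∈ S, r (permTup g a) a

/-- `G` leaves the relation `η` invariant. -/
def GRelInv {A : Type*} (G : Set (Equiv.Perm A)) {n : ℕ}
    (η : (Fin n → A) → (Fin n → A) → Prop) : Prop :=
  ∀ g ∈ G, ∀ a b, η a b → η (permTup g a) (permTup g b)

/-- `η` (an equivalence relation on `S' ⊇ S`) approximates `r`: its restriction to `S`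
refines `r`. -/
def ApproxOf {A : Type*} {n : ℕ} (S S' : Set (Fin n → A))
    (r η : (Fin n → A) → (Fin n → A) → Prop) : Prop :=
  S ⊆ S' ∧ EqvOn S' η ∧ ∀ a b, a ∈ S → b ∈ S → η a b → r a b

/-- Presmooth approximation: each `r`-class meets some `η`-class in a set containing two
disjoint tuples in the same `G`-orbit. -/
def Presmooth {A : Type*} (G : Set (Equiv.Perm A)) {n : ℕ} (S : Set (Fin n → A))
    (r η : (Fin n → A) → (Fin n → A) → Prop) : Prop :=
  ∀ a ∈ S, ∃ b c, b ∈ S ∧ c ∈ S ∧ r a b ∧ r a c ∧ η b c ∧ OrbEq G b c ∧ DisjTup b c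

/-- Smooth approximation: each `r`-class meets some `η`-class in a set containing
a full `G`-orbit. -/
def Smooth {A : Type*} (G : Set (Equiv.Perm A)) {n : ℕ} (S : Set (Fin n → A))
    (r η : (Fin n → A) → (Fin n → A) → Prop) : Prop :=
  ∀ a ∈ S, ∃ b, b ∈ S ∧ r a b ∧ ∀ c, OrbEq G b c → c ∈ S ∧ r a c ∧ η b c

/-- Very smooth approximation: `G`-orbit-equivalence refines `η` on `S`. -/
def VerySmooth {A : Type*} (G : Set (Equiv.Perm A)) {n : ℕ} (S : Set (Fin n → A))
    (η : (Fin n → A) → (Fin n → A) → Prop) : Prop :=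
  ∀ a b, a ∈ S → b ∈ S → OrbEq G a b → η a b

/-- `G` is `n`-"primitive": on each orbit of `n`-tuples, any `G`-invariant equivalence
relation relating two disjoint tuples is full. -/
def PrimitiveN {A : Type*} (G : Set (Equiv.Perm A)) (n : ℕ) : Prop :=
  ∀ (a₀ : Fin n → A) (r : (Fin n → A) → (Fin n → A) → Prop),
    EqvOn {b | OrbEq G a₀ b} r → GRelInv G r →
    (∃ a b, r a b ∧ DisjTup a b) →
    ∀ a b, OrbEq G a₀ a → OrbEq G a₀ b → r a b

/-! ### Relational structures -/

/-- A relational structure on `M` with signature `(ι, ar)`. -/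
abbrev Struct (M : Type*) (ι : Type) (ar : ι → ℕ) := ∀ i : ι, (Fin (ar i) → M) → Prop

/-- First-order definable relations over `B` (without parameters). -/
inductive FODef {M : Type*} {ι : Type} {ar : ι → ℕ} (B : Struct M ι ar) :
    ∀ {k : ℕ}, ((Fin k → M) → Prop) → Prop
  | basic (i : ι) : FODef B (B i)
  | eq : FODef B (fun x : Fin 2 → M => x 0 = x 1)
  | reindex {m k : ℕ} (σ : Fin m → Fin k) {R : (Fin m → M) → Prop} :
      FODef B R → FODef B (fun x : Fin k → M => R (x ∘ σ))
  | inter {k : ℕ} {R R' : (Fin k → M) → Prop} :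
      FODef B R → FODef B R' → FODef B (fun x => R x ∧ R' x)
  | compl {k : ℕ} {R : (Fin k → M) → Prop} : FODef B R → FODef B (fun x => ¬ R x)
  | ex {k : ℕ} {R : (Fin (k + 1) → M) → Prop} :
      FODef B R → FODef B (fun x : Fin k → M => ∃ a, R (Fin.snoc x a))

/-- Primitive positive definable relations over `B`. -/
inductive PPDef {M : Type*} {ι : Type} {ar : ι → ℕ} (B : Struct M ι ar) :
    ∀ {k : ℕ}, ((Fin k → M) → Prop) → Prop
  | basic (i : ι) : PPDef B (B i)
  | eq : PPDef B (fun x : Fin 2 → M => x 0 = x 1)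
  | reindex {m k : ℕ} (σ : Fin m → Fin k) {R : (Fin m → M) → Prop} :
      PPDef B R → PPDef B (fun x : Fin k → M => R (x ∘ σ))
  | inter {k : ℕ} {R R' : (Fin k → M) → Prop} :
      PPDef B R → PPDef B R' → PPDef B (fun x => R x ∧ R' x)
  | ex {k : ℕ} {R : (Fin (k + 1) → M) → Prop} :
      PPDef B R → PPDef B (fun x : Fin k → M => ∃ a, R (Fin.snoc x a))

def IsAut {M : Type*} {ι : Type} {ar : ι → ℕ} (B : Struct M ι ar) (g : Equiv.Perm M) : Prop :=
  ∀ (i : ι) (x : Fin (ar i) → M), B i x ↔ B i fun t => g (x t)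

def AutSet {M : Type*} {ι : Type} {ar : ι → ℕ} (B : Struct M ι ar) : Set (Equiv.Perm M) :=
  {g | IsAut B g}

/-- Homogeneity: every partial isomorphism between finite substructures extends to
an automorphism. -/
def Homogeneous {M : Type*} {ι : Type} {ar : ι → ℕ} (B : Struct M ι ar) : Prop :=
  ∀ (s : Finset M) (f : M → M),
    (∀ x ∈ s, ∀ y ∈ s, f x = f y → x = y) →
    (∀ (i : ι) (x : Fin (ar i) → M), (∀ t, x t ∈ s) → (B i x ↔ B i fun t => f (x t))) →
    ∃ g : Equiv.Perm M, IsAut B g ∧ ∀ x ∈ s, g x = f x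

def TransitiveStruct {M : Type*} {ι : Type} {ar : ι → ℕ} (B : Struct M ι ar) : Prop :=
  ∀ a b : M, ∃ g ∈ AutSet B, g a = b

def EmbedsVia {N M : Type*} {ι : Type} {ar : ι → ℕ} (X : Struct N ι ar) (B : Struct M ι ar)
    (e : N → M) : Prop :=
  Function.Injective e ∧ ∀ (i : ι) (x : Fin (ar i) → N), X i x ↔ B i fun t => e (x t)

def Embeds {N M : Type*} {ι : Type} {ar : ι → ℕ} (X : Struct N ι ar) (B : Struct M ι ar) :
    Prop :=
  ∃ e, EmbedsVia X B e

def RestrictStruct {N : Type*} {ι : Type} {ar : ι → ℕ} (X : Struct N ι ar) (s : Set N) :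
    Struct s ι ar := fun i x => X i fun t => (x t : N)

/-- The age of `B` has no minimal bound of size 3. -/
def NoMinBound3 {M : Type*} {ι : Type} {ar : ι → ℕ} (B : Struct M ι ar) : Prop :=
  ¬ ∃ X : Struct (Fin 3) ι ar, ¬ Embeds X B ∧
    ∀ s : Finset (Fin 3), s ≠ Finset.univ →
      Embeds (RestrictStruct X (s : Set (Fin 3))) B

def IsEndo {M : Type*} {ι : Type} {ar : ι → ℕ} (B : Struct M ι ar) (e : M → M) : Prop :=
  ∀ (i : ι) (x : Fin (ar i) → M), B i x → B i fun t => e (x t)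

/-- Model-complete core (for structures): every endomorphism agrees with an automorphism
on every finite set. -/
def MCCoreStruct {M : Type*} {ι : Type} {ar : ι → ℕ} (B : Struct M ι ar) : Prop :=
  ∀ e : M → M, IsEndo B e → ∀ s : Finset M, ∃ g ∈ AutSet B, ∀ x ∈ s, g x = e x

/-- The polymorphism clone of a relational structure. -/
def PolOps {M : Type*} {ι : Type} {ar : ι → ℕ} (B : Struct M ι ar) :
    ∀ k : ℕ, Set ((Fin k → M) → M) :=
  fun k => {f | ∀ (i : ι) (t : Fin k → Fin (ar i) → M),
    (∀ j, B i (t j)) → B i fun p => f fun j => t j p}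

def DependsOn {M : Type*} {k : ℕ} (f : (Fin k → M) → M) (i : Fin k) : Prop :=
  ∃ x y : Fin k → M, (∀ j, j ≠ i → x j = y j) ∧ f x ≠ f y

def Essential {M : Type*} {k : ℕ} (f : (Fin k → M) → M) : Prop :=
  ∃ i j, i ≠ j ∧ DependsOn f i ∧ DependsOn f j

/-! ### Tournaments -/

structure IsTournament {T : Type*} (E : T → T → Prop) : Prop where
  irrefl : ∀ x, ¬ E x x
  asymm : ∀ x y, E x y → ¬ E y x
  total : ∀ x y, x ≠ y → E x y ∨ E y x

/-- A binary relation viewed as a relational structure with a single binary relation. -/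
def TS {T : Type*} (E : T → T → Prop) : Struct T Unit (fun _ => 2) :=
  fun _ x => E (x 0) (x 1)

/-- Universality for tournaments: every finite tournament embeds. -/
def UnivTournament {T : Type*} (E : T → T → Prop) : Prop :=
  ∀ (m : ℕ) (R : Fin m → Fin m → Prop), IsTournament R → Embeds (TS R) (TS E)

/-- The pure-equality structure (empty signature). -/
def TrivSig : PEmpty → ℕ := fun e => e.elim

def EqStruct (T : Type*) : Struct T PEmpty TrivSig := fun i => i.elim

/-- `f` preserves `G`-orbit-equivalence on injective tuples. -/
def PreservesOrbInj {M : Type*} (G : Set (Equiv.Perm M)) {k : ℕ}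
    (f : (Fin k → M) → M) : Prop :=
  ∀ (m : ℕ) (xs ys : Fin k → Fin m → M), (∀ i, Function.Injective (xs i)) →
    (∀ i, Function.Injective (ys i)) → (∀ i, OrbEq G (xs i) (ys i)) →
    OrbEq G (appN f xs) (appN f ys)

/-!
The tuples of `S` that are `η`-related to a disjoint tuple of their own `G`-orbit form a
`C`-invariant set, since the operations of `C` act on orbits, preserve `≠` and preserve `η`.
Presmoothness puts such a tuple into every `r`-class, so by minimality every tuple of `S` is one.
Then each orbit inside `S` contains a disjoint `η`-pair, and `n`-primitivity, applied to `η`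
restricted to that orbit, makes the whole orbit a single `η`-class.
-/

section SmoothApprox

variable {A : Type*} {n : ℕ}

lemma orbEq_refl (G : Subgroup (Equiv.Perm A)) (x : Fin n → A) :
    OrbEq (G : Set (Equiv.Perm A)) x x :=
  ⟨1, G.one_mem, rfl⟩

lemma OrbEq.permTup {G : Subgroup (Equiv.Perm A)} {x y : Fin n → A}
    (h : OrbEq (G : Set (Equiv.Perm A)) x y) {g : Equiv.Perm A} (hg : g ∈ G) :
    OrbEq (G : Set (Equiv.Perm A)) x (permTup g y) := by
  obtain ⟨g₀, hg₀, rfl⟩ := h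
  exact ⟨g * g₀, G.mul_mem hg hg₀, rfl⟩

lemma ClassesInv.mem_of_orbEq {G : Set (Equiv.Perm A)} {S : Set (Fin n → A)}
    {r : (Fin n → A) → (Fin n → A) → Prop} (h : ClassesInv G S r) (hr : EqvOn S r)
    {a b : Fin n → A} (ha : a ∈ S) (hab : OrbEq G a b) : b ∈ S := by
  obtain ⟨g, hg, rfl⟩ := hab
  exact (hr.dom (h g hg a ha)).1

def restrictTo (T : Set (Fin n → A)) (η : (Fin n → A) → (Fin n → A) → Prop)
    (x z : Fin n → A) : Prop :=
  x ∈ T ∧ z ∈ T ∧ η x z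

lemma EqvOn.restrictTo {S' T : Set (Fin n → A)} {η : (Fin n → A) → (Fin n → A) → Prop}
    (hη : EqvOn S' η) (hT : T ⊆ S') : EqvOn T (restrictTo T η) where
  refl x hx := ⟨hx, hx, hη.refl x (hT hx)⟩
  symm := fun ⟨hx, hz, h⟩ => ⟨hz, hx, hη.symm h⟩
  trans := fun ⟨hx, _, h⟩ ⟨_, hw, h'⟩ => ⟨hx, hw, hη.trans h h'⟩
  dom := fun ⟨hx, hz, _⟩ => ⟨hx, hz⟩

lemma GRelInv.restrictTo {G : Set (Equiv.Perm A)} {T : Set (Fin n → A)}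
    {η : (Fin n → A) → (Fin n → A) → Prop} (hη : GRelInv G η)
    (hT : ∀ g ∈ G, ∀ x ∈ T, permTup g x ∈ T) : GRelInv G (restrictTo T η) :=
  fun g hg x z ⟨hx, hz, h⟩ => ⟨hT g hg x hx, hT g hg z hz, hη g hg x z h⟩

lemma PrimitiveN.rel_of_orbEq {G : Subgroup (Equiv.Perm A)}
    (hprim : PrimitiveN (G : Set (Equiv.Perm A)) n) {S' : Set (Fin n → A)}
    {η : (Fin n → A) → (Fin n → A) → Prop} (hη : EqvOn S' η)
    (hηG : GRelInv (G : Set (Equiv.Perm A)) η) {a y : Fin n → A}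
    (horbit : ∀ b, OrbEq (G : Set (Equiv.Perm A)) a b → b ∈ S')
    (hay : η a y) (hy : OrbEq (G : Set (Equiv.Perm A)) a y) (hdisj : DisjTup a y)
    {b : Fin n → A} (hab : OrbEq (G : Set (Equiv.Perm A)) a b) : η a b := by
  set T := {b | OrbEq (G : Set (Equiv.Perm A)) a b}
  have ha : a ∈ T := orbEq_refl G a
  have hρ := hprim a (restrictTo T η) (hη.restrictTo horbit)
    (hηG.restrictTo fun g hg x hx => OrbEq.permTup hx hg) ⟨a, y, ⟨ha, hy, hay⟩, hdisj⟩
  exact (hρ a b ha hab).2.2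

def PreservesNe (C : ∀ k : ℕ, Set ((Fin k → A) → A)) : Prop :=
  ∀ (k : ℕ) (f : (Fin k → A) → A), f ∈ C k →
    ∀ x y : Fin k → A, (∀ i, x i ≠ y i) → f x ≠ f y

lemma PreservesNe.disjTup_appN {C : ∀ k : ℕ, Set ((Fin k → A) → A)} (hC : PreservesNe C)
    {k : ℕ} {f : (Fin k → A) → A} (hf : f ∈ C k) {xs ys : Fin k → Fin n → A}
    (h : ∀ i, DisjTup (xs i) (ys i)) : DisjTup (appN f xs) (appN f ys) :=
  fun i j => hC k f hf _ _ fun t => h t i j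

def disjointOrbitMates (G : Set (Equiv.Perm A)) (S : Set (Fin n → A))
    (η : (Fin n → A) → (Fin n → A) → Prop) : Set (Fin n → A) :=
  {x | x ∈ S ∧ ∃ y, η x y ∧ OrbEq G x y ∧ DisjTup x y}

lemma setInvN_disjointOrbitMates {C : ∀ k : ℕ, Set ((Fin k → A) → A)}
    {G : Set (Equiv.Perm A)} {S : Set (Fin n → A)} {η : (Fin n → A) → (Fin n → A) → Prop}
    (hneq : PreservesNe C) (hcanon : NCanonical G n C) (hS : SetInvN C S)
    (hη : RelInvN C η) : SetInvN C (disjointOrbitMates G S η) := by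
  intro k f hf xs hxs
  choose ys hη' horb hdisj using fun i => (hxs i).2
  exact ⟨hS k f hf xs fun i => (hxs i).1, appN f ys, hη k f hf xs ys hη',
    hcanon k f hf xs ys horb, hneq.disjTup_appN hf hdisj⟩

lemma Presmooth.exists_rel_mem_disjointOrbitMates {G : Set (Equiv.Perm A)}
    {S : Set (Fin n → A)} {r η : (Fin n → A) → (Fin n → A) → Prop} (h : Presmooth G S r η)
    {a : Fin n → A} (ha : a ∈ S) : ∃ b ∈ disjointOrbitMates G S η, r a b := by
  obtain ⟨b, c, hb, -, hab, -, hbc, horb, hdisj⟩ := h a ha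
  exact ⟨b, ⟨hb, c, hbc, horb, hdisj⟩, hab⟩

lemma Presmooth.disjointOrbitMates_meets_two_classes {G : Set (Equiv.Perm A)}
    {S : Set (Fin n → A)} {r η : (Fin n → A) → (Fin n → A) → Prop} (h : Presmooth G S r η)
    (hr : EqvOn S r) (htwo : ∃ a b, a ∈ S ∧ b ∈ S ∧ ¬ r a b) :
    ∃ a ∈ disjointOrbitMates G S η, ∃ b ∈ disjointOrbitMates G S η, ¬ r a b := by
  obtain ⟨a, b, ha, hb, hab⟩ := htwo
  obtain ⟨a', ha', haa'⟩ := h.exists_rel_mem_disjointOrbitMates ha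
  obtain ⟨b', hb', hbb'⟩ := h.exists_rel_mem_disjointOrbitMates hb
  exact ⟨a', ha', b', hb', fun h' => hab (hr.trans (hr.trans haa' h') (hr.symm hbb'))⟩

end SmoothApprox

theorem presmooth_implies_very_smooth_general {A : Type*} (n : ℕ)
    (C : ∀ k : ℕ, Set ((Fin k → A) → A))
    (G : Subgroup (Equiv.Perm A))
    (hneq : ∀ (k : ℕ) (f : (Fin k → A) → A), f ∈ C k →
      ∀ x y : Fin k → A, (∀ i, x i ≠ y i) → f x ≠ f y)
    (hprim : PrimitiveN (G : Set (Equiv.Perm A)) n)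
    (hcanon : NCanonical (G : Set (Equiv.Perm A)) n C)
    (S : Set (Fin n → A)) (r : (Fin n → A) → (Fin n → A) → Prop)
    (hSinv : SetInvN C S) (hr : EqvOn S r)
    (htwo : ∃ a b, a ∈ S ∧ b ∈ S ∧ ¬ r a b)
    (hminimal : ∀ T : Set (Fin n → A), T ⊆ S → SetInvN C T →
      (∃ a ∈ T, ∃ b ∈ T, ¬ r a b) → T = S)
    (hclassinv : ClassesInv (G : Set (Equiv.Perm A)) S r)
    (S' : Set (Fin n → A)) (η : (Fin n → A) → (Fin n → A) → Prop)
    (happrox : ApproxOf S S' r η)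
    (hηG : GRelInv (G : Set (Equiv.Perm A)) η)
    (hηC : RelInvN C η)
    (hpre : Presmooth (G : Set (Equiv.Perm A)) S r η) :
    VerySmooth (G : Set (Equiv.Perm A)) S η := by
  obtain ⟨hSS', hη, -⟩ := happrox
  have hmates : disjointOrbitMates (G : Set (Equiv.Perm A)) S η = S :=
    hminimal _ (fun _ hx => hx.1) (setInvN_disjointOrbitMates hneq hcanon hSinv hηC)
      (hpre.disjointOrbitMates_meets_two_classes hr htwo)
  intro a b ha _ hab
  obtain ⟨-, y, hay, hy, hdisj⟩ := hmates.symm ▸ ha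
  exact hprim.rel_of_orbEq hη hηG (fun _ hc => hSS' (hclassinv.mem_of_orbEq hr ha hc))
    hay hy hdisj hab

/-- for a minimal subfactor of an n-canonical clone preserving ≠ over an
n-"primitive" group, every presmooth invariant approximation is very smooth. -/
theorem presmooth_implies_very_smooth {A : Type*} (n : ℕ) (hn : 1 ≤ n)
    (C : ∀ k : ℕ, Set ((Fin k → A) → A)) (hC : IsClone C)
    (G : Subgroup (Equiv.Perm A))
    (hneq : ∀ (k : ℕ) (f : (Fin k → A) → A), f ∈ C k →
      ∀ x y : Fin k → A, (∀ i, x i ≠ y i) → f x ≠ f y)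
    (hprim : PrimitiveN (G : Set (Equiv.Perm A)) n)
    (hcanon : NCanonical (G : Set (Equiv.Perm A)) n C)
    (S : Set (Fin n → A)) (r : (Fin n → A) → (Fin n → A) → Prop)
    (hSinv : SetInvN C S) (hrinv : RelInvN C r) (hr : EqvOn S r)
    (htwo : ∃ a b, a ∈ S ∧ b ∈ S ∧ ¬ r a b)
    (hminimal : ∀ T : Set (Fin n → A), T ⊆ S → SetInvN C T →
      (∃ a ∈ T, ∃ b ∈ T, ¬ r a b) → T = S)
    (hclassinv : ClassesInv (G : Set (Equiv.Perm A)) S r)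
    (S' : Set (Fin n → A)) (η : (Fin n → A) → (Fin n → A) → Prop)
    (happrox : ApproxOf S S' r η)
    (hηG : GRelInv (G : Set (Equiv.Perm A)) η)
    (hηC : RelInvN C η)
    (hpre : Presmooth (G : Set (Equiv.Perm A)) S r η) :
    VerySmooth (G : Set (Equiv.Perm A)) S η :=
  presmooth_implies_very_smooth_general n C G hneq hprim hcanon S r hSinv hr htwo hminimal hclassinv
    S' η happrox hηG hηC hpre

end Paper
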